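/- The halfspace depth region D(p) equals the intersection over all unit directions u of the closed halfspaces {x : ⟨u, x⟩ ≥ q_p(⟨u, Y⟩)}, where q_p(⟨u,Y⟩) is the p-quantile of the projection of Y onto u, provided the distribution of ⟨u,Y⟩ has no atoms for every u (i.e., all one-dimensional projections are continuous). -/

import Mathlib

/-!
Replacing `u` by `-u` turns the halfspace `{y | ⟪u, x⟫ ≤ ⟪u, y⟫}` into `{y | ⟪-u, y⟫ ≤ ⟪-u, x⟫}`,
so `depth x ≥ p` says that the distribution function `F_u` of every projection `⟪u, Y⟫` satisfies
`p ≤ F_u ⟪u, x⟫`. Since `F_u` is monotone and right-continuous, the superlevel set `{F_u ≥ p}`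
is the closed ray `[q_p, ∞)`, so this is equivalent to `q_p ≤ ⟪u, x⟫`.
-/

open MeasureTheory Set ENNReal

noncomputable def quantile (μ : Measure ℝ) (τ : ℝ) : ℝ :=
  sInf {x : ℝ | ENNReal.ofReal τ ≤ μ (Iic x)}

noncomputable def depth {d : ℕ} (μ : Measure (EuclideanSpace ℝ (Fin d)))
    (x : EuclideanSpace ℝ (Fin d)) : ℝ≥0∞ :=
  ⨅ u : {u : EuclideanSpace ℝ (Fin d) // ‖u‖ = 1},
    μ {y | (inner ℝ u.1 x : ℝ) ≤ inner ℝ u.1 y}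

open Filter Topology

namespace StieltjesFunction

variable {R : Type*} [ConditionallyCompleteLinearOrder R] [TopologicalSpace R] [OrderTopology R]
  [DenselyOrdered R] [NoMaxOrder R] {f : StieltjesFunction R} {c : ℝ}

theorem le_apply_csInf_superlevel (hne : {x | c ≤ f x}.Nonempty)
    (hbdd : BddBelow {x | c ≤ f x}) : c ≤ f (sInf {x | c ≤ f x}) := by
  set q := sInf {x | c ≤ f x}
  have le_right_of_q : ∀ t ∈ Ioi q, c ≤ f t := fun t ht => by
    obtain ⟨s, hs, hst⟩ := (csInf_lt_iff hbdd hne).1 ht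
    exact hs.trans (f.mono hst.le)
  exact ge_of_tendsto ((f.right_continuous q).mono Ioi_subset_Ici_self)
    (eventually_nhdsWithin_of_forall le_right_of_q)

theorem csInf_superlevel_le_iff (hne : {x | c ≤ f x}.Nonempty)
    (hbdd : BddBelow {x | c ≤ f x}) {t : R} : sInf {x | c ≤ f x} ≤ t ↔ c ≤ f t :=
  ⟨fun h => (le_apply_csInf_superlevel hne hbdd).trans (f.mono h), fun h => csInf_le hbdd h⟩

end StieltjesFunction

namespace ProbabilityTheory

lemma csInf_superlevel_cdf_le_iff (ν : Measure ℝ) {p : ℝ} (hp : p ∈ Ioo 0 1) {t : ℝ} :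
    sInf {x | p ≤ cdf ν x} ≤ t ↔ p ≤ cdf ν t := by
  refine StieltjesFunction.csInf_superlevel_le_iff ?_ ?_
  · exact ((tendsto_cdf_atTop ν).eventually_const_le hp.2).exists
  · obtain ⟨b, hb⟩ := ((tendsto_cdf_atBot ν).eventually_lt_const hp.1).exists_forall_of_atBot
    exact ⟨b, fun x hx => not_lt.1 fun hxb => (hb x hxb.le).not_ge hx⟩

end ProbabilityTheory

section Quantile

open ProbabilityTheory

variable (ν : Measure ℝ) [IsProbabilityMeasure ν]

lemma quantile_eq_csInf_superlevel_cdf (p : ℝ) :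
    quantile ν p = sInf {x | p ≤ cdf ν x} := by
  simp only [quantile, ← ofReal_cdf, ENNReal.ofReal_le_ofReal_iff (cdf_nonneg ν _)]

lemma quantile_le_iff {p : ℝ} (hp : p ∈ Ioo 0 1) {t : ℝ} :
    quantile ν p ≤ t ↔ ENNReal.ofReal p ≤ ν (Iic t) := by
  rw [quantile_eq_csInf_superlevel_cdf, csInf_superlevel_cdf_le_iff ν hp, ← ofReal_cdf,
    ENNReal.ofReal_le_ofReal_iff (cdf_nonneg ν _)]

end Quantile

section Halfspaces

variable {E : Type*} [NormedAddCommGroup E] [InnerProductSpace ℝ E] [MeasurableSpace E]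
  [OpensMeasurableSpace E]

lemma measurable_inner_const_left (u : E) : Measurable fun y : E => (inner ℝ u y : ℝ) :=
  (continuous_const.inner continuous_id).measurable

lemma map_inner_apply_Iic (μ : Measure E) (u : E) (t : ℝ) :
    μ.map (fun y => (inner ℝ u y : ℝ)) (Iic t) = μ {y | (inner ℝ u y : ℝ) ≤ t} :=
  Measure.map_apply (measurable_inner_const_left u) measurableSet_Iic

end Halfspaces

lemma le_depth_iff {d : ℕ} (μ : Measure (EuclideanSpace ℝ (Fin d)))
    (x : EuclideanSpace ℝ (Fin d)) {a : ℝ≥0∞} :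
    a ≤ depth μ x ↔ ∀ u : {u : EuclideanSpace ℝ (Fin d) // ‖u‖ = 1},
      a ≤ μ {y | (inner ℝ u.1 y : ℝ) ≤ inner ℝ u.1 x} := by
  simp only [depth, le_iInf_iff]
  constructor <;> intro h u <;> simpa [inner_neg_left] using h ⟨-u.1, by rw [norm_neg, u.2]⟩

theorem depth_region_eq_inter_projection_halfspaces_general {d : ℕ}
    (μ : Measure (EuclideanSpace ℝ (Fin d))) [IsProbabilityMeasure μ]
    (p : ℝ) (hp : p ∈ Ioo (0:ℝ) 1) :
    {x : EuclideanSpace ℝ (Fin d) | ENNReal.ofReal p ≤ depth μ x}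
      = ⋂ u : {u : EuclideanSpace ℝ (Fin d) // ‖u‖ = 1},
          {x : EuclideanSpace ℝ (Fin d) |
            quantile (μ.map (fun y => (inner ℝ u.1 y : ℝ))) p ≤ inner ℝ u.1 x} := by
  have (u : EuclideanSpace ℝ (Fin d)) : IsProbabilityMeasure (μ.map fun y => (inner ℝ u y : ℝ)) :=
    Measure.isProbabilityMeasure_map (measurable_inner_const_left u).aemeasurable
  ext x
  simp only [mem_ofPred_eq, mem_iInter, le_depth_iff,
    quantile_le_iff _ hp, map_inner_apply_Iic]

theorem depth_region_eq_inter_projection_halfspaces {d : ℕ}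
    (μ : Measure (EuclideanSpace ℝ (Fin d))) [IsProbabilityMeasure μ]
    (hatomless : ∀ u : EuclideanSpace ℝ (Fin d), ‖u‖ = 1 →
      ∀ t : ℝ, μ {y | (inner ℝ u y : ℝ) = t} = 0)
    (p : ℝ) (hp : p ∈ Ioo (0:ℝ) 1) :
    {x : EuclideanSpace ℝ (Fin d) | ENNReal.ofReal p ≤ depth μ x}
      = ⋂ u : {u : EuclideanSpace ℝ (Fin d) // ‖u‖ = 1},
          {x : EuclideanSpace ℝ (Fin d) |
            quantile (μ.map (fun y => (inner ℝ u.1 y : ℝ))) p ≤ inner ℝ u.1 x} :=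
  depth_region_eq_inter_projection_halfspaces_general μ p hp
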